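/- Let f : ℝ² → ℝ be differentiable and suppose that for all real t and all a,b ∈ ℝ, ∂₁f(t, a) = ∂₁f(t, b) (the first partial derivative does not depend on the second argument), and symmetrically ∂₂f(a, t) = ∂₂f(b, t). If moreover f is symmetric (f(a,b) = f(b,a)), then there is a differentiable g : ℝ → ℝ with f(a,b) = g(a) + g(b). -/

import Mathlib

/-- If `f : ℝ² → ℝ` is differentiable, its first partial
derivative does not depend on the second argument, its second partial
derivative does not depend on the first argument, and `f` is symmetric, then
`f a b = g a + g b` for a single differentiable `g`. -/
theorem symmetric_separable_partials_additive
    (f : ℝ → ℝ → ℝ)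
    (hdiff : Differentiable ℝ (fun p : ℝ × ℝ => f p.1 p.2))
    (h1 : ∀ t a b : ℝ, deriv (fun s => f s a) t = deriv (fun s => f s b) t)
    (h2 : ∀ t a b : ℝ, deriv (fun s => f a s) t = deriv (fun s => f b s) t)
    (hsym : ∀ a b : ℝ, f a b = f b a) :
    ∃ g : ℝ → ℝ, Differentiable ℝ g ∧ ∀ a b : ℝ, f a b = g a + g b := by
  have hsec : ∀ b : ℝ, Differentiable ℝ (fun a => f a b) := by
    intro b
    have : Differentiable ℝ (fun a : ℝ => (a, b)) :=
      (differentiable_id.prodMk (differentiable_const b))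
    exact hdiff.comp this
  refine ⟨fun a => f a 0 - f 0 0 / 2, (hsec 0).sub_const _, ?_⟩
  intro a b
  have key : f a b - f a 0 = f 0 b - f 0 0 := by
    have hconst : ∀ x : ℝ, f x b - f x 0 = f 0 b - f 0 0 := by
      have hd : Differentiable ℝ (fun x => f x b - f x 0) :=
        (hsec b).sub (hsec 0)
      have hz : ∀ x, deriv (fun x => f x b - f x 0) x = 0 := by
        intro x
        rw [deriv_fun_sub ((hsec b) x) ((hsec 0) x), h1 x b 0, sub_self]
      have := is_const_of_deriv_eq_zero hd hz a 0
      intro x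
      have h := is_const_of_deriv_eq_zero hd hz x 0
      simpa using h
    exact hconst a
  have h0b : f 0 b = f b 0 := hsym 0 b
  linarith [key]
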